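/- Let δ>1, A∈ℝ, and (Tᵢ) satisfy Tᵢ₊₁ = δTᵢ + A + Jᵢ₊₁ with ∑_{i≥1} i|Jᵢ|<∞. Let T̃₀ = T₀ + ∑_{j≥1} Jⱼ/δ^j and define (T̃ᵢ) by T̃ᵢ = δT̃ᵢ₋₁ + A. Then ∑_{i=0}^∞ (Tᵢ - T̃ᵢ) converges absolutely and lim_{i→∞}(Tᵢ - T̃ᵢ) = 0. -/
import Mathlib


set_option maxHeartbeats 1000000 in
/-- Lemma 8.2: the series ∑ (Tᵢ - T̃ᵢ) converges absolutely and Tᵢ - T̃ᵢ → 0. -/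
theorem stmt12 (δ A : ℝ) (hδ : 1 < δ) (T J Ttil : ℕ → ℝ)
    (hrec : ∀ i, T (i + 1) = δ * T i + A + J (i + 1))
    (hsum : Summable (fun i : ℕ => (i : ℝ) * |J i|))
    (h0 : Ttil 0 = T 0 + ∑' j : ℕ, J (j + 1) / δ ^ (j + 1))
    (hrec2 : ∀ i, Ttil (i + 1) = δ * Ttil i + A) :
    Summable (fun i => |T i - Ttil i|) ∧
    Filter.Tendsto (fun i => T i - Ttil i) Filter.atTop (nhds 0) := by
  have hδ0 : (0:ℝ) < δ := lt_trans one_pos hδ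
  have hinv0 : (0:ℝ) < δ⁻¹ := inv_pos.2 hδ0
  have hinv1 : δ⁻¹ < 1 := inv_lt_one_of_one_lt₀ hδ
  -- summability of |J (k+1)|
  have hJs : Summable fun k : ℕ => |J (k + 1)| := by
    have h1 : Summable fun k : ℕ => ((k : ℝ) + 1) * |J (k + 1)| := by
      have := (summable_nat_add_iff 1).2 hsum
      simpa using this
    refine h1.of_nonneg_of_le (fun k => abs_nonneg _) (fun k => ?_)
    nlinarith [abs_nonneg (J (k + 1)), (Nat.cast_nonneg k : (0:ℝ) ≤ (k:ℝ))]
  set S : ℕ → ℝ := fun i => ∑' j : ℕ, J (i + j + 1) * δ⁻¹ ^ (j + 1) with hS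
  have habs : ∀ i m : ℕ, Summable fun j : ℕ => |J (i + j + 1)| * δ⁻¹ ^ (j + m) := by
    intro i m
    refine (hJs.comp_injective (add_right_injective i)).of_nonneg_of_le
      (fun j => mul_nonneg (abs_nonneg _) (by positivity)) (fun j => ?_)
    calc |J (i + j + 1)| * δ⁻¹ ^ (j + m) ≤ |J (i + j + 1)| * 1 := by
          exact mul_le_mul_of_nonneg_left (pow_le_one₀ hinv0.le hinv1.le) (abs_nonneg _)
      _ = |J (i + j + 1)| := mul_one _
  have hsum' : ∀ i m : ℕ, Summable fun j : ℕ => J (i + j + 1) * δ⁻¹ ^ (j + m) := by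
    intro i m
    have heq : ∀ j : ℕ, |J (i + j + 1) * δ⁻¹ ^ (j + m)| = |J (i + j + 1)| * δ⁻¹ ^ (j + m) := by
      intro j; rw [abs_mul, abs_pow, abs_of_pos hinv0]
    exact summable_abs_iff.mp ((habs i m).congr fun j => (heq j).symm)
  have hsum0 : ∀ i, Summable fun j : ℕ => J (i + j + 1) * δ⁻¹ ^ j := by
    intro i; simpa using hsum' i 0
  have hdiff : ∀ i, T i - Ttil i = -S i := by
    intro i; induction i with
    | zero =>
      have heq : (∑' j : ℕ, J (j + 1) / δ ^ (j + 1)) = S 0 := by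
        simp [hS, div_eq_mul_inv, inv_pow]
      rw [h0, heq]; ring
    | succ i ih =>
      have key : δ * S i = J (i + 1) + S (i + 1) := by
        have h1 : δ * S i = ∑' j : ℕ, J (i + j + 1) * δ⁻¹ ^ j := by
          rw [hS, ← tsum_mul_left]
          congr 1; funext j
          rw [pow_succ]; field_simp
        rw [h1, Summable.tsum_eq_zero_add (hsum0 i)]
        have h2 : (∑' j : ℕ, J (i + (j + 1) + 1) * δ⁻¹ ^ (j + 1)) = S (i + 1) := by
          rw [hS]
          congr 1; funext j
          congr 2
          omega
        simp only [pow_zero, mul_one] at *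
        rw [h2]
      rw [hrec i, hrec2 i]
      have h2 : δ * T i - δ * Ttil i = -(δ * S i) := by rw [← mul_sub, ih]; ring
      linarith [key, h2]
  -- summability over i
  have htail : ∀ n : ℕ, (∑' i : ℕ, |J (i + n + 1)|) ≤ ∑' k : ℕ, |J (k + 1)| := by
    intro n
    exact Summable.tsum_le_tsum_of_inj (fun i => i + n) (add_left_injective n)
      (fun c _ => abs_nonneg _) (fun b => le_refl _)
      (hJs.comp_injective (add_left_injective n)) hJs
  have hFnn : ∀ p : ℕ × ℕ, 0 ≤ |J (p.2 + p.1 + 1)| * δ⁻¹ ^ (p.1 + 1) :=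
    fun p => mul_nonneg (abs_nonneg _) (by positivity)
  have hF : Summable (fun p : ℕ × ℕ => |J (p.2 + p.1 + 1)| * δ⁻¹ ^ (p.1 + 1)) := by
    rw [summable_prod_of_nonneg hFnn]
    constructor
    · intro j
      dsimp only
      exact (hJs.comp_injective (add_left_injective j)).mul_right _
    · have geo : Summable fun j : ℕ => (∑' k : ℕ, |J (k + 1)|) * (δ⁻¹ ^ j * δ⁻¹) :=
        (((summable_geometric_of_lt_one hinv0.le hinv1).mul_right δ⁻¹).mul_left _)
      have geo' : Summable fun j : ℕ => (∑' k : ℕ, |J (k + 1)|) * δ⁻¹ ^ (j + 1) := by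
        refine geo.congr fun j => ?_
        rw [pow_succ]
      dsimp only
      refine geo'.of_nonneg_of_le
        (fun j => tsum_nonneg fun i => mul_nonneg (abs_nonneg _) (by positivity))
        (fun j => ?_)
      rw [tsum_mul_right]
      exact mul_le_mul_of_nonneg_right (htail j) (by positivity)
  have hFm : Summable fun i : ℕ => ∑' j : ℕ, |J (i + j + 1)| * δ⁻¹ ^ (j + 1) := by
    have hswap : Summable (fun p : ℕ × ℕ => |J (p.1 + p.2 + 1)| * δ⁻¹ ^ (p.2 + 1)) :=
      hF.prod_symm
    exact ((summable_prod_of_nonneg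
      (fun p : ℕ × ℕ => mul_nonneg (abs_nonneg _) (by positivity))).mp hswap).2
  have hSle : ∀ i, |S i| ≤ ∑' j : ℕ, |J (i + j + 1)| * δ⁻¹ ^ (j + 1) := by
    intro i
    have h2 : ∀ j : ℕ, ‖J (i + j + 1) * δ⁻¹ ^ (j + 1)‖ = |J (i + j + 1)| * δ⁻¹ ^ (j + 1) :=
      fun j => by rw [Real.norm_eq_abs, abs_mul, abs_pow, abs_of_pos hinv0]
    have h1 := norm_tsum_le_tsum_norm (f := fun j : ℕ => J (i + j + 1) * δ⁻¹ ^ (j + 1))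
      ((habs i 1).congr fun j => (h2 j).symm)
    calc |S i| = ‖∑' j : ℕ, J (i + j + 1) * δ⁻¹ ^ (j + 1)‖ := (Real.norm_eq_abs _).symm
      _ ≤ ∑' j : ℕ, ‖J (i + j + 1) * δ⁻¹ ^ (j + 1)‖ := h1
      _ = ∑' j : ℕ, |J (i + j + 1)| * δ⁻¹ ^ (j + 1) := tsum_congr h2
  have hsummable : Summable fun i => |T i - Ttil i| := by
    refine hFm.of_nonneg_of_le (fun i => abs_nonneg _) (fun i => ?_)
    rw [hdiff i, abs_neg]
    exact hSle i
  refine ⟨hsummable, ?_⟩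
  exact (summable_abs_iff.mp hsummable).tendsto_atTop_zero
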